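/- Let (𝐬, r(𝐬)) ∈ 𝒮 be connected and stable, with r(𝐬) = (1, r_1, …, r_k). Let 1 ≤ m ≤ k−1 be such that 𝐬(r_{m−1}−1, r_m) ∈ S_← and assume r_m + 2 ≤ r. If i_{r_m−1} = i_{r_m+1} and r_{m−1} < r_m − 1, then j_{r_{m+1}} < i_{r_m−2} and r_{m+1} > r_m + 1. -/

import Mathlib

/-!
Write `R = r_m`. The entries `s_{R-2}, s_{R-1}` of the decreasing run overlap, and stability at the
break together with `i_{R-1} = i_{R+1}` forces `j_{R+1} < j_{R-1}`; since `s_{R+1}` may not overlap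
`s_{R-2}`, it ends before `i_{R-2}`. Along the following increasing run every interval starts before
its predecessor ends, hence left of `i_{R-2}`, and as it overlaps neither `s_{R-2}` nor `s_{R-1}` it
ends before `i_{R-2}` as well. If that run consisted of `s_{R+1}` alone, the next decreasing run
would make `s_{R+2}` overlap `s_{R-1}`.
-/

namespace AltSnakePaper

/-- `[i,j] ∈ 𝕀ₙ`: the interval condition `0 ≤ j - i ≤ n + 1`. -/
def InIn (n : ℕ) (i j : ℤ) : Prop := 0 ≤ j - i ∧ j - i ≤ (n : ℤ) + 1

/-- The intervals `[i1,j1]` and `[i2,j2]` overlap. -/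
def Overlap (i1 j1 i2 j2 : ℤ) : Prop :=
  (i1 < i2 ∧ i2 ≤ j1 ∧ j1 < j2) ∨ (i2 < i1 ∧ i1 ≤ j2 ∧ j2 < j1)

/-- The pair `([i1,j1],[i2,j2])` is connected. -/
def ConnPair (n : ℕ) (i1 j1 i2 j2 : ℤ) : Prop :=
  Overlap i1 j1 i2 j2 ∧ InIn n i1 j2 ∧ InIn n i2 j1

/-- The subtuple `𝐬(a,b)` (entries with indices `a+1, …, b`) lies in `S_→`. -/
def SRight (ii jj : ℕ → ℤ) (a b : ℕ) : Prop :=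
  ∀ s, a + 1 ≤ s → s + 1 ≤ b → ii s < ii (s + 1) ∧ jj s < jj (s + 1)

/-- The subtuple `𝐬(a,b)` (entries with indices `a+1, …, b`) lies in `S_←`. -/
def SLeft (ii jj : ℕ → ℤ) (a b : ℕ) : Prop :=
  ∀ s, a + 1 ≤ s → s + 1 ≤ b → ii (s + 1) < ii s ∧ jj (s + 1) < jj s

/-- `(𝐬, r(𝐬))` is an alternating snake, where `𝐬 = ([i_1,j_1],…,[i_r,j_r])`
(encoded by `ii jj : ℕ → ℤ`, entries indexed `1,…,r`) and
`r(𝐬) = (r_0, r_1, …, r_k)` (encoded by `rr : ℕ → ℕ`). -/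
structure IsAltSnake (n r k : ℕ) (rr : ℕ → ℕ) (ii jj : ℕ → ℤ) : Prop where
  hr : 1 ≤ r
  hk : k ≤ r
  mem : ∀ s, 1 ≤ s → s ≤ r → InIn n (ii s) (jj s)
  distinct : ∀ s p, 1 ≤ s → s ≤ r → 1 ≤ p → p ≤ r → s ≠ p → ii s ≠ ii p ∨ jj s ≠ jj p
  rr0 : rr 0 = 1
  rrk : rr k = r
  rrmono : ∀ m, m < k → rr m < rr (m + 1)
  mono : ∀ m, 1 ≤ m → m ≤ k →
      SRight ii jj (rr (m - 1) - 1) (rr m) ∨ SLeft ii jj (rr (m - 1) - 1) (rr m)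
  alt : ∀ m, 1 ≤ m → m < k →
      (SRight ii jj (rr (m - 1) - 1) (rr m) ↔ SLeft ii jj (rr m - 1) (rr (m + 1)))
  nonoverlap : ∀ m s t, 1 ≤ m → m < k → 1 ≤ s → s < rr m → rr m < t → t ≤ r →
      ¬ Overlap (ii s) (jj s) (ii t) (jj t)

/-- The subtuple `𝐬(a,b)` is connected: all consecutive pairs are connected. -/
def SegConnected (n : ℕ) (ii jj : ℕ → ℤ) (a b : ℕ) : Prop :=
  ∀ s, a + 1 ≤ s → s + 1 ≤ b → ConnPair n (ii s) (jj s) (ii (s + 1)) (jj (s + 1))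

/-- The subtuple `𝐬(a,b)` (with its induced r-vector, whose internal break points
are the `rr m` with `a + 1 < rr m < b`) is prime. -/
def SegPrime (n k : ℕ) (rr : ℕ → ℕ) (ii jj : ℕ → ℤ) (a b : ℕ) : Prop :=
  SegConnected n ii jj a b ∧
    ∀ m, 1 ≤ m → m < k → a + 1 < rr m → rr m < b →
      ii (rr m - 1) ≠ ii (rr m + 1) ∧ jj (rr m - 1) ≠ jj (rr m + 1)

/-- The subtuple `𝐬(a,b)` (with its induced r-vector) is stable. -/
def SegStable (k : ℕ) (rr : ℕ → ℕ) (ii jj : ℕ → ℤ) (a b : ℕ) : Prop :=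
  ∀ m, 1 ≤ m → m < k → a + 1 < rr m → rr m < b →
    (ii (rr m + 1) < ii (rr m - 1) → jj (rr m + 1) < ii (rr m - 1)) ∧
    (jj (rr m - 1) < jj (rr m + 1) → jj (rr m - 1) < ii (rr m + 1))

/-- The alternating snake is stable. -/
def Stable (k : ℕ) (rr : ℕ → ℕ) (ii jj : ℕ → ℤ) : Prop :=
  ∀ m, 1 ≤ m → m < k →
    (ii (rr m + 1) < ii (rr m - 1) → jj (rr m + 1) < ii (rr m - 1)) ∧
    (jj (rr m - 1) < jj (rr m + 1) → jj (rr m - 1) < ii (rr m + 1))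

/-- The boundary condition allowing a cut of the snake at `p = rr m - ε`:
`a_{r_m-1} = a_{r_m+1}` for some `a ∈ {i, j}`, with `ε ∈ {0,1}` chosen so that, `b`
denoting the other member of `{i,j}`, one has `b_{r_m−1+2ε} < b_{r_m+1−2ε}` if
`𝐬(r_m−2, r_m) ∈ S_←` and `b_{r_m+1−2ε} < b_{r_m−1+2ε}` if `𝐬(r_m−2, r_m) ∈ S_→`. -/
def BoundaryCond (k : ℕ) (rr : ℕ → ℕ) (ii jj : ℕ → ℤ) (m ε : ℕ) : Prop :=
  (ii (rr m - 1) = ii (rr m + 1) ∧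
    (SLeft ii jj (rr m - 2) (rr m) → jj (rr m - 1 + 2 * ε) < jj (rr m + 1 - 2 * ε)) ∧
    (SRight ii jj (rr m - 2) (rr m) → jj (rr m + 1 - 2 * ε) < jj (rr m - 1 + 2 * ε))) ∨
  (jj (rr m - 1) = jj (rr m + 1) ∧
    (SLeft ii jj (rr m - 2) (rr m) → ii (rr m - 1 + 2 * ε) < ii (rr m + 1 - 2 * ε)) ∧
    (SRight ii jj (rr m - 2) (rr m) → ii (rr m + 1 - 2 * ε) < ii (rr m - 1 + 2 * ε)))

/-- `p` is an admissible cut point for the prime decomposition. -/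
def CutAt (n r k : ℕ) (rr : ℕ → ℕ) (ii jj : ℕ → ℤ) (p : ℕ) : Prop :=
  p = r ∨
  ¬ ConnPair n (ii p) (jj p) (ii (p + 1)) (jj (p + 1)) ∨
  ∃ m ε, 1 ≤ m ∧ m < k ∧ ε ≤ 1 ∧ p = rr m - ε ∧ BoundaryCond k rr ii jj m ε

/-- `0 = c 0 < c 1 < ⋯ < c L = r` are the cut points of a prime decomposition
of the snake, the prime factors being the segments `𝐬(c t, c (t+1))`. -/
def IsPrimeDecomp (n r k : ℕ) (rr : ℕ → ℕ) (ii jj : ℕ → ℤ) (c : ℕ → ℕ) (L : ℕ) : Prop :=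
  1 ≤ L ∧ c 0 = 0 ∧ c L = r ∧ (∀ t, t < L → c t < c (t + 1)) ∧
  (∀ t, t < L → SegPrime n k rr ii jj (c t) (c (t + 1))) ∧
  (∀ t, 1 ≤ t → t ≤ L → CutAt n r k rr ii jj (c t))

/-- The segment `𝐬(a,b)` is contained in a prime factor of `𝐬`. -/
def ContainedInPF (n r k : ℕ) (rr : ℕ → ℕ) (ii jj : ℕ → ℤ) (a b : ℕ) : Prop :=
  ∃ c L t, IsPrimeDecomp n r k rr ii jj c L ∧ t < L ∧ c t ≤ a ∧ b ≤ c (t + 1)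

variable {n r k : ℕ} {rr : ℕ → ℕ} {ii jj : ℕ → ℤ}

theorem Overlap.symm {i₁ j₁ i₂ j₂ : ℤ} (h : Overlap i₁ j₁ i₂ j₂) : Overlap i₂ j₂ i₁ j₁ :=
  Or.symm h

theorem Overlap.le_of_lt {i₁ j₁ i₂ j₂ : ℤ} (h : Overlap i₁ j₁ i₂ j₂) (hi : i₁ < i₂) : i₂ ≤ j₁ := by
  unfold Overlap at h; omega

theorem Overlap.lt_of_not_overlap {ia ja ib jb ic jc : ℤ} (hba : Overlap ib jb ia ja)
    (hbc : ib < ic) (hca : ic < ia) (hna : ¬ Overlap ia ja ic jc) (hnb : ¬ Overlap ib jb ic jc) :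
    jc < ia := by
  unfold Overlap at *; omega

theorem SRight.mono {a b a' b' : ℕ} (h : SRight ii jj a b) (ha : a ≤ a') (hb : b' ≤ b) :
    SRight ii jj a' b' :=
  fun s hs hs' ↦ h s (by omega) (by omega)

theorem SLeft.not_sRight {a b : ℕ} (h : SLeft ii jj a b) (hab : a + 2 ≤ b) :
    ¬ SRight ii jj a b := fun h' ↦
  (h (a + 1) le_rfl hab).1.not_gt (h' (a + 1) le_rfl hab).1

theorem SegConnected.mono {a b a' b' : ℕ} (h : SegConnected n ii jj a b) (ha : a ≤ a')
    (hb : b' ≤ b) : SegConnected n ii jj a' b' :=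
  fun s hs hs' ↦ h s (by omega) (by omega)

theorem SRight.jj_lt_of_not_overlap {p q : ℕ} {ia ja ib jb : ℤ} (hR : SRight ii jj p q)
    (hc : SegConnected n ii jj p q) (hba : Overlap ib jb ia ja)
    (hna : ∀ t, p < t → t ≤ q → ¬ Overlap ia ja (ii t) (jj t))
    (hnb : ∀ t, p < t → t ≤ q → ¬ Overlap ib jb (ii t) (jj t))
    (hi : ib ≤ ii (p + 1)) (hj : jj (p + 1) < ia) {t : ℕ} (hpt : p < t) (htq : t ≤ q) :
    jj t < ia := by
  suffices ∀ t, p + 1 ≤ t → t ≤ q → ib ≤ ii t ∧ jj t < ia from (this t hpt htq).2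
  intro t hpt
  induction t, hpt using Nat.le_induction with
  | base => exact fun _ ↦ ⟨hi, hj⟩
  | succ t hpt ih =>
    intro htq
    obtain ⟨hit, hjt⟩ := ih (by omega)
    have hinc := (hR t hpt htq).1
    have hstart : ii (t + 1) ≤ jj t := (hc t hpt htq).1.le_of_lt hinc
    exact ⟨by omega, hba.lt_of_not_overlap (by omega) (by omega)
      (hna (t + 1) (by omega) htq) (hnb (t + 1) (by omega) htq)⟩

namespace IsAltSnake

theorem strictMonoOn_rr (h : IsAltSnake n r k rr ii jj) : StrictMonoOn rr (Set.Iic k) :=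
  strictMonoOn_of_lt_succ Set.ordConnected_Iic fun a _ _ ha ↦ by
    rw [Order.succ_eq_add_one] at ha ⊢
    exact h.rrmono a ha

theorem one_le_rr (h : IsAltSnake n r k rr ii jj) {a : ℕ} (ha : a ≤ k) : 1 ≤ rr a :=
  h.rr0 ▸ h.strictMonoOn_rr.monotoneOn (Set.mem_Iic.2 (Nat.zero_le k)) ha (Nat.zero_le a)

theorem one_lt_rr (h : IsAltSnake n r k rr ii jj) {a : ℕ} (ha1 : 1 ≤ a) (ha : a ≤ k) :
    1 < rr a :=
  h.rr0 ▸ h.strictMonoOn_rr (Set.mem_Iic.2 (Nat.zero_le k)) ha (by omega)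

theorem rr_le (h : IsAltSnake n r k rr ii jj) {a : ℕ} (ha : a ≤ k) : rr a ≤ r :=
  h.rrk ▸ h.strictMonoOn_rr.monotoneOn ha (Set.mem_Iic.2 le_rfl) ha

theorem sRight_of_sLeft (h : IsAltSnake n r k rr ii jj) {m : ℕ} (hm1 : 1 ≤ m) (hm2 : m < k)
    (hL : SLeft ii jj (rr (m - 1) - 1) (rr m)) : SRight ii jj (rr m - 1) (rr (m + 1)) := by
  have hrr : rr (m - 1) < rr m := Nat.sub_add_cancel hm1 ▸ h.rrmono (m - 1) (by omega)
  have h1 := h.one_lt_rr hm1 hm2.le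
  refine (h.mono (m + 1) (by omega) hm2).resolve_right fun hL' ↦ ?_
  rw [Nat.add_sub_cancel] at hL'
  exact hL.not_sRight (by omega) ((h.alt m hm1 hm2).2 hL')

/-- If `j` increased across the break, stability would make `[i_{r_m-1}, j_{r_m-1}]` end before
`i_{r_m+1} = i_{r_m-1}`. -/
theorem jj_lt_of_ii_eq (h : IsAltSnake n r k rr ii jj) (hst : Stable k rr ii jj) {m : ℕ}
    (hm1 : 1 ≤ m) (hm2 : m < k)
    (hieq : ii (rr m - 1) = ii (rr m + 1)) : jj (rr m + 1) < jj (rr m - 1) := by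
  have h1 := h.one_lt_rr hm1 hm2.le
  have hr := h.rr_le (a := m + 1) hm2
  have hm := h.rrmono m hm2
  have hne : jj (rr m - 1) ≠ jj (rr m + 1) :=
    (h.distinct (rr m - 1) (rr m + 1) (by omega) (by omega) (by omega) (by omega) (by omega)
      ).resolve_left (not_not.2 hieq)
  have hmem := (h.mem (rr m - 1) (by omega) (by omega)).1
  refine lt_of_not_ge fun hle ↦ ?_
  have := (hst m hm1 hm2).2 (lt_of_le_of_ne hle hne)
  omega

theorem rr_succ_ne_of_ii_eq (h : IsAltSnake n r k rr ii jj) (hc : SegConnected n ii jj 0 r)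
    {m : ℕ} (hm1 : 1 ≤ m) (hm2 : m < k) (hR : SRight ii jj (rr m - 1) (rr (m + 1)))
    (hr2 : rr m + 2 ≤ r) (hieq : ii (rr m - 1) = ii (rr m + 1))
    (hjlt : jj (rr m + 1) < jj (rr m - 1)) : rr (m + 1) ≠ rr m + 1 := by
  intro heq
  have hk : m + 1 < k := by
    by_contra hk
    have := h.rrk
    rw [show k = m + 1 by omega, heq] at this
    omega
  have hL := (h.alt (m + 1) (by omega) hk).1 (by rwa [Nat.add_sub_cancel])
  have hrr := h.rrmono (m + 1) hk
  obtain ⟨hi, hj⟩ := hL (rr m + 1) (by omega) (by omega)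
  have hstart := (hc (rr m + 1) (by omega) (by omega)).1.symm.le_of_lt hi
  have h1 := h.one_lt_rr hm1 hm2.le
  exact h.nonoverlap m (rr m - 1) (rr m + 1 + 1) hm1 hm2 (by omega) (by omega) (by omega)
    (by omega) (Or.inr ⟨by omega, by omega, by omega⟩)

end IsAltSnake

theorem stmt_11_general (n r k : ℕ) (rr : ℕ → ℕ) (ii jj : ℕ → ℤ)
    (h : IsAltSnake n r k rr ii jj)
    (hc : SegConnected n ii jj 0 r) (hst : Stable k rr ii jj)
    (m : ℕ) (hm1 : 1 ≤ m) (hm2 : m < k)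
    (hdir : SLeft ii jj (rr (m - 1) - 1) (rr m)) (hr2 : rr m + 2 ≤ r)
    (hieq : ii (rr m - 1) = ii (rr m + 1)) (hrm : rr (m - 1) < rr m - 1) :
    jj (rr (m + 1)) < ii (rr m - 2) ∧ rr m + 1 < rr (m + 1) := by
  have hR : 3 ≤ rr m := by have := h.one_le_rr (a := m - 1) (by omega); omega
  have hq := h.rr_le (a := m + 1) hm2
  have hnext := h.rrmono m hm2
  have hright := h.sRight_of_sLeft hm1 hm2 hdir
  have hjlt := h.jj_lt_of_ii_eq hst hm1 hm2 hieq
  have hsep : ∀ s t, 1 ≤ s → s < rr m → rr m < t → t ≤ r →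
      ¬ Overlap (ii s) (jj s) (ii t) (jj t) := fun s t ↦ h.nonoverlap m s t hm1 hm2
  have hprev : ii (rr m - 1) < ii (rr m - 2) ∧ jj (rr m - 1) < jj (rr m - 2) := by
    simpa only [show rr m - 2 + 1 = rr m - 1 by omega] using hdir (rr m - 2) (by omega) (by omega)
  have hov : Overlap (ii (rr m - 1)) (jj (rr m - 1)) (ii (rr m - 2)) (jj (rr m - 2)) := by
    simpa only [show rr m - 2 + 1 = rr m - 1 by omega]
      using (hc (rr m - 2) (by omega) (by omega)).1.symm
  have hbase : jj (rr m + 1) < ii (rr m - 2) := by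
    have := hsep (rr m - 2) (rr m + 1) (by omega) (by omega) (by omega) (by omega)
    unfold Overlap at this
    omega
  refine ⟨(hright.mono (by omega) le_rfl).jj_lt_of_not_overlap (hc.mono (by omega) hq) hov
    (fun t _ _ ↦ hsep _ t (by omega) (by omega) (by omega) (by omega))
    (fun t _ _ ↦ hsep _ t (by omega) (by omega) (by omega) (by omega)) hieq.le hbase hnext le_rfl,
    ?_⟩
  have := h.rr_succ_ne_of_ii_eq hc hm1 hm2 hright hr2 hieq hjlt
  omega

/-- Proposition (ieq (i)): for a connected stable alternating snake, if
`𝐬(r_{m−1}−1, r_m) ∈ S_←`, `r_m + 2 ≤ r`, `i_{r_m−1} = i_{r_m+1}` and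
`r_{m−1} < r_m − 1`, then `j_{r_{m+1}} < i_{r_m−2}` and `r_{m+1} > r_m + 1`. -/
theorem stmt_11 (n r k : ℕ) (hn : 1 ≤ n) (rr : ℕ → ℕ) (ii jj : ℕ → ℤ)
    (h : IsAltSnake n r k rr ii jj)
    (hc : SegConnected n ii jj 0 r) (hst : Stable k rr ii jj)
    (m : ℕ) (hm1 : 1 ≤ m) (hm2 : m < k)
    (hdir : SLeft ii jj (rr (m - 1) - 1) (rr m)) (hr2 : rr m + 2 ≤ r)
    (hieq : ii (rr m - 1) = ii (rr m + 1)) (hrm : rr (m - 1) < rr m - 1) :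
    jj (rr (m + 1)) < ii (rr m - 2) ∧ rr m + 1 < rr (m + 1) :=
  stmt_11_general n r k rr ii jj h hc hst m hm1 hm2 hdir hr2 hieq hrm

end AltSnakePaper
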